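/- Let $\Phi = \Psi + \mathcal{X}$ where $\Psi = h$ is convex differentiable with $L_\Psi$-Lipschitz gradient (i.e., $L_f = 0$) and $\mathcal{X}$ is a proper closed convex function with bounded domain. Run the composite AG algorithm with $\alpha_k = 2/(k+1)$, $\beta_k = 1/(2L_\Psi)$, $\lambda_k = k\beta_k/2$, i.e., $x_k^{md} = (1-\alpha_k)x_{k-1}^{ag}+\alpha_k x_{k-1}$, $x_k = \mathcal{P}(x_{k-1},\nabla\Psi(x_k^{md}),\lambda_k)$, $x_k^{ag} = \mathcal{P}(x_k^{md},\nabla\Psi(x_k^{md}),\beta_k)$. If $x^*$ minimizes $\Phi$, then for any $N \ge 1$: $\Phi(x_N^{ag}) - \Phi(x^*) \le \frac{4L_\Psi\|x_0 - x^*\|^2}{N(N+1)}$. -/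

import Mathlib

/-!
Write `Φ = Ψ + 𝒳`. Convexity and the descent lemma for `Ψ`, together with the three-point
inequality of the proximal map (a consequence of the `1/c`-strong convexity of the objective
defining `𝒫(·, ·, c)`), give for every step with `α_k λ_k ≤ β_k ≤ 1/L_Ψ`
  `Φ(x_k^ag) ≤ (1 - α_k) Φ(x_{k-1}^ag) + α_k Φ(x*) + α_k/(2λ_k) (‖x_{k-1} - x*‖² - ‖x_k - x*‖²)`.
For `α_k = 2/(k+1)` and `λ_k = k/(4L_Ψ)`, multiplying by `k(k+1)` shows that the Lyapunov function
`k(k+1) (Φ(x_k^ag) - Φ(x*)) + 4L_Ψ ‖x_k - x*‖²` is nonincreasing, and at `k = 0` it equals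
`4L_Ψ ‖x_0 - x*‖²`.
-/

open Set Filter Topology InnerProductSpace AffineMap
open scoped RealInnerProductSpace

theorem EReal.ne_top_and_add_toReal_le {a b : ℝ} {p q : EReal} (hp : p ≠ ⊥) (hq : q ≠ ⊤)
    (hqbot : q ≠ ⊥) (h : (a : EReal) + p ≤ (b : EReal) + q) :
    p ≠ ⊤ ∧ a + p.toReal ≤ b + q.toReal := by
  lift q to ℝ using ⟨hq, hqbot⟩
  have hptop : p ≠ ⊤ := by
    rintro rfl
    rw [EReal.coe_add_top, ← EReal.coe_add, top_le_iff] at h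
    exact EReal.coe_ne_top _ h
  lift p to ℝ using ⟨hptop, hp⟩
  exact ⟨hptop, by exact_mod_cast h⟩

theorem StrongConvexOn.add_mul_norm_sq_le_of_isMinOn {E : Type*} [NormedAddCommGroup E]
    [NormedSpace ℝ E] {s : Set E} {m : ℝ} {f : E → ℝ} {x y : E} (hf : StrongConvexOn s m f)
    (hmin : IsMinOn f s x) (hx : x ∈ s) (hy : y ∈ s) :
    f x + m / 2 * ‖y - x‖ ^ 2 ≤ f y := by
  have hsegment : ∀ t ∈ Ioo (0 : ℝ) 1, f x + (1 - t) * (m / 2 * ‖y - x‖ ^ 2) ≤ f y := by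
    rintro t ⟨ht0, ht1⟩
    have hcomb := hf.2 hx hy (sub_nonneg.2 ht1.le) ht0.le (sub_add_cancel 1 t)
    have hle : f x ≤ f ((1 - t) • x + t • y) :=
      hmin (hf.1 hx hy (sub_nonneg.2 ht1.le) ht0.le (sub_add_cancel 1 t))
    rw [norm_sub_rev, smul_eq_mul, smul_eq_mul] at hcomb
    nlinarith
  have hlim : Tendsto (fun t : ℝ => f x + (1 - t) * (m / 2 * ‖y - x‖ ^ 2)) (𝓝[>] 0)
      (𝓝 (f x + m / 2 * ‖y - x‖ ^ 2)) :=
    tendsto_nhdsWithin_of_tendsto_nhds (Continuous.tendsto' (by fun_prop) 0 _ (by simp))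
  exact le_of_tendsto hlim (eventually_of_mem (Ioo_mem_nhdsGT one_pos) hsegment)

theorem ag_schedule_lyapunov_le {k L α lam a a' s D D' : ℝ} (hk : 0 ≤ k) (hL : 0 < L)
    (hα : α = 2 / (k + 2)) (hlam : lam = (k + 1) / (4 * L))
    (h : a' ≤ (1 - α) * a + α * s + α / (2 * lam) * (D - D')) :
    (k + 1) * (k + 2) * (a' - s) + 4 * L * D' ≤ k * (k + 1) * (a - s) + 4 * L * D := by
  have hw : 0 < (k + 1) * (k + 2) := by positivity
  have hcoef : α / (2 * lam) = 4 * L / ((k + 1) * (k + 2)) := by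
    rw [hα, hlam]; field_simp
  rw [hcoef, hα] at h
  have hmul := mul_le_mul_of_nonneg_left h hw.le
  field_simp at hmul
  linarith

section InnerProductSpace

variable {E : Type*} [NormedAddCommGroup E] [InnerProductSpace ℝ E]

theorem HasGradientAt.hasDerivAt_comp_lineMap [CompleteSpace E] {f : E → ℝ} {g x y : E}
    {t : ℝ} (hf : HasGradientAt f g (lineMap (k := ℝ) x y t)) :
    HasDerivAt (fun s : ℝ => f (lineMap (k := ℝ) x y s)) ⟪g, y - x⟫ t := by
  simpa [toDual_apply_apply, Function.comp_def] using
    hf.hasFDerivAt.comp_hasDerivAt t hasDerivAt_lineMap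

theorem ConvexOn.add_inner_le_of_hasGradientAt [CompleteSpace E] {f : E → ℝ} {g x : E}
    (hf : ConvexOn ℝ univ f) (hg : HasGradientAt f g x) (y : E) :
    f x + ⟪g, y - x⟫ ≤ f y := by
  have hline : ConvexOn ℝ univ (f ∘ lineMap (k := ℝ) x y) := by
    simpa using hf.comp_affineMap (lineMap (k := ℝ) x y)
  have hslope := hline.le_slope_of_hasDerivAt (mem_univ 0) (mem_univ 1) one_pos
    (HasGradientAt.hasDerivAt_comp_lineMap (t := 0) (by simpa using hg))
  simp only [slope_def_field, Function.comp_apply, lineMap_apply_one, lineMap_apply_zero,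
    sub_zero, div_one] at hslope
  linarith

theorem apply_le_add_inner_add_half_mul_norm_sq [CompleteSpace E] {f : E → ℝ} {g : E → E}
    {L : ℝ} (hf : ∀ x, HasGradientAt f (g x) x) (hg : ∀ x y, ‖g x - g y‖ ≤ L * ‖x - y‖)
    (x y : E) :
    f y ≤ f x + ⟪g x, y - x⟫ + L / 2 * ‖y - x‖ ^ 2 := by
  let ℓ : ℝ → E := lineMap (k := ℝ) x y
  let φ : ℝ → ℝ := fun t => f (ℓ t) - t * ⟪g x, y - x⟫ - L / 2 * t ^ 2 * ‖y - x‖ ^ 2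
  have hφ : ∀ t, HasDerivAt φ (⟪g (ℓ t) - g x, y - x⟫ - L * t * ‖y - x‖ ^ 2) t := fun t =>
    ((((hf (ℓ t)).hasDerivAt_comp_lineMap).sub
      ((hasDerivAt_id t).mul_const ⟪g x, y - x⟫)).sub
      (((hasDerivAt_pow 2 t).const_mul (L / 2)).mul_const (‖y - x‖ ^ 2))).congr_deriv
      (by rw [inner_sub_left]; ring)
  have hanti : AntitoneOn φ (Icc 0 1) := by
    refine antitoneOn_of_hasDerivWithinAt_nonpos (convex_Icc 0 1)
      (fun t _ => (hφ t).continuousAt.continuousWithinAt) (fun t _ => (hφ t).hasDerivWithinAt) ?_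
    rintro t ht
    rw [interior_Icc] at ht
    have hstep : ℓ t - x = t • (y - x) := lineMap_vsub_left x y t
    calc ⟪g (ℓ t) - g x, y - x⟫ - L * t * ‖y - x‖ ^ 2
        ≤ ‖g (ℓ t) - g x‖ * ‖y - x‖ - L * t * ‖y - x‖ ^ 2 := by
          gcongr; exact real_inner_le_norm _ _
      _ ≤ L * ‖ℓ t - x‖ * ‖y - x‖ - L * t * ‖y - x‖ ^ 2 := by
          gcongr; exact hg _ _
      _ = 0 := by
          rw [hstep, norm_smul, Real.norm_of_nonneg ht.1.le]; ring
  have hends := hanti (left_mem_Icc.2 zero_le_one) (right_mem_Icc.2 zero_le_one) zero_le_one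
  simp only [φ, ℓ, lineMap_apply_one, lineMap_apply_zero, one_mul, one_pow, mul_one, zero_mul,
    zero_pow two_ne_zero, mul_zero, sub_zero] at hends
  linarith

def ERealConvex (X : E → EReal) : Prop :=
  ∀ u v : E, ∀ a b : ℝ, 0 ≤ a → 0 ≤ b → a + b = 1 →
    X (a • u + b • v) ≤ (a : EReal) * X u + (b : EReal) * X v

theorem ERealConvex.convexOn_toReal {X : E → EReal} (hX : ERealConvex X)
    (hbot : ∀ u, X u ≠ ⊥) : ConvexOn ℝ {u | X u ≠ ⊤} fun u => (X u).toReal := by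
  have hcomb : ∀ ⦃u⦄, X u ≠ ⊤ → ∀ ⦃v⦄, X v ≠ ⊤ → ∀ ⦃a b : ℝ⦄, 0 ≤ a → 0 ≤ b → a + b = 1 →
      X (a • u + b • v) ≤ ((a * (X u).toReal + b * (X v).toReal : ℝ) : EReal) := by
    intro u hu v hv a b ha hb hab
    have h := hX u v a b ha hb hab
    rwa [← EReal.coe_toReal hu (hbot u), ← EReal.coe_toReal hv (hbot v), ← EReal.coe_mul,
      ← EReal.coe_mul, ← EReal.coe_add] at h
  refine ⟨fun u hu v hv a b ha hb hab => ?_, fun u hu v hv a b ha hb hab => ?_⟩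
  · exact ne_top_of_le_ne_top (EReal.coe_ne_top _) (hcomb hu hv ha hb hab)
  · exact EReal.toReal_le_toReal (hcomb hu hv ha hb hab) (hbot _) (EReal.coe_ne_top _)

theorem ConvexOn.strongConvexOn_inner_add_norm_sub_sq_div {s : Set E} {h : E → ℝ}
    (hh : ConvexOn ℝ s h) (y z : E) {c : ℝ} (hc : 0 < c) :
    StrongConvexOn s c⁻¹ fun u => ⟪y, u⟫ + ‖u - z‖ ^ 2 / (2 * c) + h u := by
  rw [strongConvexOn_iff_convex]
  have haffine := ((innerₛₗ ℝ (y - c⁻¹ • z)).convexOn hh.1).add_const (‖z‖ ^ 2 / (2 * c))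
  refine (hh.add haffine).congr fun u _ => ?_
  simp only [Pi.add_apply, innerₛₗ_apply_apply, norm_sub_sq_real, inner_sub_left,
    real_inner_smul_left, real_inner_comm z u]
  field_simp
  ring

/-- `p` is a value of the paper's proximal map `𝒫(z, y, c)`. -/
def IsProxPoint (X : E → EReal) (z y : E) (c : ℝ) (p : E) : Prop :=
  ∀ u, ((⟪y, p⟫ + ‖p - z‖ ^ 2 / (2 * c) : ℝ) : EReal) + X p ≤
    ((⟪y, u⟫ + ‖u - z‖ ^ 2 / (2 * c) : ℝ) : EReal) + X u

theorem IsProxPoint.ne_top_and_le {X : E → EReal} (hbot : ∀ u, X u ≠ ⊥) {z y p u : E} {c : ℝ}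
    (hp : IsProxPoint X z y c p) (hu : X u ≠ ⊤) :
    X p ≠ ⊤ ∧ ⟪y, p⟫ + ‖p - z‖ ^ 2 / (2 * c) + (X p).toReal ≤
      ⟪y, u⟫ + ‖u - z‖ ^ 2 / (2 * c) + (X u).toReal :=
  EReal.ne_top_and_add_toReal_le (hbot p) hu (hbot u) (hp u)

theorem IsProxPoint.add_norm_sq_le {X : E → EReal} (hX : ERealConvex X) (hbot : ∀ u, X u ≠ ⊥)
    {z y p u : E} {c : ℝ} (hc : 0 < c) (hp : IsProxPoint X z y c p) (hu : X u ≠ ⊤) :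
    ⟪y, p⟫ + ‖p - z‖ ^ 2 / (2 * c) + (X p).toReal + ‖u - p‖ ^ 2 / (2 * c) ≤
      ⟪y, u⟫ + ‖u - z‖ ^ 2 / (2 * c) + (X u).toReal := by
  have hmin : IsMinOn (fun u => ⟪y, u⟫ + ‖u - z‖ ^ 2 / (2 * c) + (X u).toReal)
      {u | X u ≠ ⊤} p := isMinOn_iff.2 fun w hw => (hp.ne_top_and_le hbot hw).2
  have hgrowth := StrongConvexOn.add_mul_norm_sq_le_of_isMinOn
    ((hX.convexOn_toReal hbot).strongConvexOn_inner_add_norm_sub_sq_div y z hc)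
    hmin (hp.ne_top_and_le hbot hu).1 hu
  convert hgrowth using 2
  field_simp

theorem IsProxPoint.add_le_of_lipschitz_gradient [CompleteSpace E] {Ψ : E → ℝ} {g : E → E}
    {L β : ℝ} (hΨ : ∀ x, HasGradientAt Ψ (g x) x) (hg : ∀ x y, ‖g x - g y‖ ≤ L * ‖x - y‖)
    (hβ : 0 < β) (hLβ : L * β ≤ 1) {X : E → EReal} (hbot : ∀ u, X u ≠ ⊥) {z p u : E}
    (hp : IsProxPoint X z (g z) β p) (hu : X u ≠ ⊤) :
    Ψ p + (X p).toReal ≤ Ψ z + ⟪g z, u - z⟫ + ‖u - z‖ ^ 2 / (2 * β) + (X u).toReal := by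
  have hdescent := apply_le_add_inner_add_half_mul_norm_sq hΨ hg z p
  have hmin := (hp.ne_top_and_le hbot hu).2
  have hcoef : L / 2 * ‖p - z‖ ^ 2 ≤ ‖p - z‖ ^ 2 / (2 * β) := by
    rw [le_div_iff₀ (by positivity)]
    nlinarith [sq_nonneg ‖p - z‖]
  rw [inner_sub_right] at hdescent ⊢
  linarith

/-- The alternative `α = 1` is the first step, whose anchor `xag = x₀` need not lie in the
domain of `X`; there `(X xag).toReal` is a junk value, multiplied by `1 - α = 0`. -/
theorem ag_step_objective_le [CompleteSpace E] {Ψ : E → ℝ} {g : E → E} {L : ℝ}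
    (hΨ : ∀ x, HasGradientAt Ψ (g x) x) (hg : ∀ x y, ‖g x - g y‖ ≤ L * ‖x - y‖)
    (hΨconv : ConvexOn ℝ univ Ψ) {X : E → EReal} (hX : ERealConvex X) (hbot : ∀ u, X u ≠ ⊥)
    {α β lam : ℝ} (hα₀ : 0 ≤ α) (hα₁ : α ≤ 1) (hβ : 0 < β) (hlam : 0 < lam) (hLβ : L * β ≤ 1)
    (hαlam : α * lam ≤ β) {xag x xmd xag' x' xstar : E} (hmd : xmd = (1 - α) • xag + α • x)
    (hx' : IsProxPoint X x (g xmd) lam x') (hxag' : IsProxPoint X xmd (g xmd) β xag')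
    (hstar : X xstar ≠ ⊤) (hanchor : α = 1 ∨ X xag ≠ ⊤) :
    Ψ xag' + (X xag').toReal ≤ (1 - α) * (Ψ xag + (X xag).toReal) +
      α * (Ψ xstar + (X xstar).toReal) +
        α / (2 * lam) * (‖x - xstar‖ ^ 2 - ‖x' - xstar‖ ^ 2) := by
  set u := (1 - α) • xag + α • x'
  have hx'dom : X x' ≠ ⊤ := (hx'.ne_top_and_le hbot hstar).1
  obtain ⟨hudom, hXu⟩ :
      X u ≠ ⊤ ∧ (X u).toReal ≤ (1 - α) * (X xag).toReal + α * (X x').toReal := by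
    rcases hanchor with rfl | hxag
    · simpa [u] using hx'dom
    have hconv := hX.convexOn_toReal hbot
    exact ⟨hconv.1 hxag hx'dom (by linarith) hα₀ (by ring),
      hconv.2 hxag hx'dom (by linarith) hα₀ (by ring)⟩
  have hgrad := hxag'.add_le_of_lipschitz_gradient hΨ hg hβ hLβ hbot hudom
  have hprox := hx'.add_norm_sq_le hX hbot hlam hstar
  have hconv_xag := hΨconv.add_inner_le_of_hasGradientAt (hΨ xmd) xag
  have hconv_star := hΨconv.add_inner_le_of_hasGradientAt (hΨ xmd) xstar
  have hinner : ⟪g xmd, u - xmd⟫ = (1 - α) * ⟪g xmd, xag - xmd⟫ + α * ⟪g xmd, x' - xmd⟫ := by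
    rw [show u - xmd = (1 - α) • (xag - xmd) + α • (x' - xmd) by rw [hmd]; module,
      inner_add_right, real_inner_smul_right, real_inner_smul_right]
  have hnorm : ‖u - xmd‖ ^ 2 = α ^ 2 * ‖x' - x‖ ^ 2 := by
    rw [show u - xmd = α • (x' - x) by rw [hmd]; module, norm_smul, Real.norm_of_nonneg hα₀,
      mul_pow]
  have hcoef : α ^ 2 / (2 * β) ≤ α / (2 * lam) := by
    rw [div_le_div_iff₀ (by positivity) (by positivity)]
    nlinarith
  have hbracket : Ψ xmd + ⟪g xmd, x' - xmd⟫ + (X x').toReal + ‖x' - x‖ ^ 2 / (2 * lam) ≤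
      Ψ xstar + (X xstar).toReal + (‖x - xstar‖ ^ 2 - ‖x' - xstar‖ ^ 2) / (2 * lam) := by
    rw [norm_sub_rev xstar x', norm_sub_rev xstar x] at hprox
    rw [inner_sub_right] at hconv_star ⊢
    rw [sub_div]
    linarith
  have h1α : 0 ≤ 1 - α := by linarith
  rw [hinner, hnorm] at hgrad
  linear_combination hgrad + hXu + mul_le_mul_of_nonneg_left hconv_xag h1α +
    mul_le_mul_of_nonneg_left hbracket hα₀ +
    mul_le_mul_of_nonneg_right hcoef (sq_nonneg ‖x' - x‖)

theorem ag_lyapunov_succ_le [CompleteSpace E] {Ψ : E → ℝ} {g : E → E} {L : ℝ}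
    (hΨ : ∀ x, HasGradientAt Ψ (g x) x) (hg : ∀ x y, ‖g x - g y‖ ≤ L * ‖x - y‖)
    (hΨconv : ConvexOn ℝ univ Ψ) (hL : 0 < L) {X : E → EReal} (hX : ERealConvex X)
    (hbot : ∀ u, X u ≠ ⊥) {k α β lam : ℝ} (hk : 0 ≤ k) (hα : α = 2 / (k + 2))
    (hβ : β = 1 / (2 * L)) (hlam : lam = (k + 1) * β / 2) {xag x xmd xag' x' xstar : E}
    (hmd : xmd = (1 - α) • xag + α • x) (hx' : IsProxPoint X x (g xmd) lam x')
    (hxag' : IsProxPoint X xmd (g xmd) β xag') (hstar : X xstar ≠ ⊤)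
    (hanchor : α = 1 ∨ X xag ≠ ⊤) :
    (k + 1) * (k + 2) * (Ψ xag' + (X xag').toReal - (Ψ xstar + (X xstar).toReal)) +
        4 * L * ‖x' - xstar‖ ^ 2 ≤
      k * (k + 1) * (Ψ xag + (X xag).toReal - (Ψ xstar + (X xstar).toReal)) +
        4 * L * ‖x - xstar‖ ^ 2 := by
  have hlam' : lam = (k + 1) / (4 * L) := by rw [hlam, hβ]; field_simp; ring
  refine ag_schedule_lyapunov_le hk hL hα hlam' (ag_step_objective_le hΨ hg hΨconv hX hbot ?_ ?_
    (by rw [hβ]; positivity) (by rw [hlam']; positivity) ?_ ?_ hmd hx' hxag' hstar hanchor)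
  · rw [hα]; positivity
  · rw [hα, div_le_one (by positivity)]; linarith
  · rw [hβ]; field_simp; norm_num
  · rw [hα, hlam', hβ, div_mul_div_comm, div_le_div_iff₀ (by positivity) (by positivity)]
    nlinarith

theorem ag_lyapunov_antitone [CompleteSpace E] {Ψ : E → ℝ} {g : E → E} {L : ℝ}
    (hΨ : ∀ x, HasGradientAt Ψ (g x) x) (hg : ∀ x y, ‖g x - g y‖ ≤ L * ‖x - y‖)
    (hΨconv : ConvexOn ℝ univ Ψ) (hL : 0 < L) {X : E → EReal} (hX : ERealConvex X)
    (hbot : ∀ u, X u ≠ ⊥) {α β lam : ℕ → ℝ} (hα : ∀ k ≥ 1, α k = 2 / ((k : ℝ) + 1))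
    (hβ : ∀ k ≥ 1, β k = 1 / (2 * L)) (hlam : ∀ k ≥ 1, lam k = (k : ℝ) * β k / 2)
    {x xag xmd : ℕ → E} (hmd : ∀ k ≥ 1, xmd k = (1 - α k) • xag (k - 1) + α k • x (k - 1))
    (hx : ∀ k ≥ 1, IsProxPoint X (x (k - 1)) (g (xmd k)) (lam k) (x k))
    (hxag : ∀ k ≥ 1, IsProxPoint X (xmd k) (g (xmd k)) (β k) (xag k))
    {xstar : E} (hstar : X xstar ≠ ⊤) :
    Antitone fun k : ℕ => k * (k + 1) * (Ψ (xag k) + (X (xag k)).toReal -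
      (Ψ xstar + (X xstar).toReal)) + 4 * L * ‖x k - xstar‖ ^ 2 := by
  refine antitone_nat_of_succ_le fun k => ?_
  have hαk : α (k + 1) = 2 / (k + 2) := by rw [hα (k + 1) (by omega)]; push_cast; ring
  have hlamk : lam (k + 1) = (k + 1) * β (k + 1) / 2 := by
    rw [hlam (k + 1) (by omega)]; push_cast; ring
  have hanchor : α (k + 1) = 1 ∨ X (xag k) ≠ ⊤ := by
    rcases k with _ | k
    · left; norm_num [hαk]
    · exact Or.inr ((hxag (k + 1) (by omega)).ne_top_and_le hbot hstar).1
  have hstep := ag_lyapunov_succ_le hΨ hg hΨconv hL hX hbot k.cast_nonneg hαk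
    (hβ (k + 1) (by omega)) hlamk (hmd (k + 1) (by omega)) (hx (k + 1) (by omega))
    (hxag (k + 1) (by omega)) hstar hanchor
  rw [Nat.add_sub_cancel] at hstep
  push_cast
  linarith

end InnerProductSpace

theorem ag_composite_convex_rate_general {n : ℕ}
    (Ψ : EuclideanSpace ℝ (Fin n) → ℝ) (g : EuclideanSpace ℝ (Fin n) → EuclideanSpace ℝ (Fin n))
    (LΨ : ℝ) (hLΨ : 0 < LΨ)
    (hg : ∀ x, HasGradientAt Ψ (g x) x)
    (hL : ∀ x y, ‖g x - g y‖ ≤ LΨ * ‖x - y‖)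
    (hΨconv : ConvexOn ℝ Set.univ Ψ)
    (X : EuclideanSpace ℝ (Fin n) → EReal)
    (hbot : ∀ u, X u ≠ ⊥)
    (hXconv : ∀ u v : EuclideanSpace ℝ (Fin n), ∀ a b : ℝ, 0 ≤ a → 0 ≤ b → a + b = 1 →
      X (a • u + b • v) ≤ (a : EReal) * X u + (b : EReal) * X v)
    (P : EuclideanSpace ℝ (Fin n) → EuclideanSpace ℝ (Fin n) → ℝ → EuclideanSpace ℝ (Fin n))
    (hP : ∀ x y c, 0 < c → ∀ u,
      ((⟪y, P x y c⟫ + ‖P x y c - x‖ ^ 2 / (2 * c) : ℝ) : EReal) + X (P x y c) ≤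
        ((⟪y, u⟫ + ‖u - x‖ ^ 2 / (2 * c) : ℝ) : EReal) + X u)
    (α β lam : ℕ → ℝ)
    (hα : ∀ k ≥ 1, α k = 2 / ((k : ℝ) + 1))
    (hβ : ∀ k ≥ 1, β k = 1 / (2 * LΨ))
    (hlam : ∀ k ≥ 1, lam k = (k : ℝ) * β k / 2)
    (x xag xmd : ℕ → EuclideanSpace ℝ (Fin n))
    (hmd : ∀ k ≥ 1, xmd k = (1 - α k) • xag (k - 1) + α k • x (k - 1))
    (hx : ∀ k ≥ 1, x k = P (x (k - 1)) (g (xmd k)) (lam k))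
    (hxag : ∀ k ≥ 1, xag k = P (xmd k) (g (xmd k)) (β k))
    (xstar : EuclideanSpace ℝ (Fin n))
    (hstar_dom : X xstar ≠ ⊤) :
    ∀ N : ℕ, 1 ≤ N →
      ((Ψ (xag N) : ℝ) : EReal) + X (xag N) ≤
        ((Ψ xstar : ℝ) : EReal) + X xstar +
          ((4 * LΨ * ‖x 0 - xstar‖ ^ 2 / ((N : ℝ) * ((N : ℝ) + 1)) : ℝ) : EReal) := by
  have hβpos : ∀ k ≥ 1, 0 < β k := fun k hk => by rw [hβ k hk]; positivity
  have hxag' : ∀ k ≥ 1, IsProxPoint X (xmd k) (g (xmd k)) (β k) (xag k) := fun k hk =>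
    hxag k hk ▸ hP _ _ _ (hβpos k hk)
  have hx' : ∀ k ≥ 1, IsProxPoint X (x (k - 1)) (g (xmd k)) (lam k) (x k) := fun k hk =>
    hx k hk ▸ hP _ _ _ (by rw [hlam k hk]; have := hβpos k hk; positivity)
  intro N hN
  have hlyap := ag_lyapunov_antitone hg hL hΨconv hLΨ hXconv hbot hα hβ hlam hmd hx' hxag'
    hstar_dom (Nat.zero_le N)
  simp only [Nat.cast_zero, zero_mul, zero_add] at hlyap
  have hNpos : (0 : ℝ) < N * (N + 1) := mul_pos (Nat.cast_pos.2 hN) (by positivity)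
  have hreal : Ψ (xag N) + (X (xag N)).toReal ≤
      Ψ xstar + (X xstar).toReal + 4 * LΨ * ‖x 0 - xstar‖ ^ 2 / (N * (N + 1)) := by
    rw [← sub_le_iff_le_add', le_div_iff₀ hNpos]
    nlinarith [sq_nonneg ‖x N - xstar‖]
  rw [← EReal.coe_toReal ((hxag' N hN).ne_top_and_le hbot hstar_dom).1 (hbot _),
    ← EReal.coe_toReal hstar_dom (hbot _)]
  exact_mod_cast hreal

theorem ag_composite_convex_rate {n : ℕ}
    (Ψ : EuclideanSpace ℝ (Fin n) → ℝ) (g : EuclideanSpace ℝ (Fin n) → EuclideanSpace ℝ (Fin n))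
    (LΨ : ℝ) (hLΨ : 0 < LΨ)
    (hg : ∀ x, HasGradientAt Ψ (g x) x)
    (hL : ∀ x y, ‖g x - g y‖ ≤ LΨ * ‖x - y‖)
    (hΨconv : ConvexOn ℝ Set.univ Ψ)
    (X : EuclideanSpace ℝ (Fin n) → EReal)
    (hproper : ∃ u, X u ≠ ⊤) (hbot : ∀ u, X u ≠ ⊥)
    (hlsc : LowerSemicontinuous X)
    (hXconv : ∀ u v : EuclideanSpace ℝ (Fin n), ∀ a b : ℝ, 0 ≤ a → 0 ≤ b → a + b = 1 →
      X (a • u + b • v) ≤ (a : EReal) * X u + (b : EReal) * X v)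
    (hbdd : Bornology.IsBounded {u | X u ≠ ⊤})
    (P : EuclideanSpace ℝ (Fin n) → EuclideanSpace ℝ (Fin n) → ℝ → EuclideanSpace ℝ (Fin n))
    (hP : ∀ x y c, 0 < c → ∀ u,
      ((⟪y, P x y c⟫ + ‖P x y c - x‖ ^ 2 / (2 * c) : ℝ) : EReal) + X (P x y c) ≤
        ((⟪y, u⟫ + ‖u - x‖ ^ 2 / (2 * c) : ℝ) : EReal) + X u)
    (α β lam : ℕ → ℝ)
    (hα : ∀ k ≥ 1, α k = 2 / ((k : ℝ) + 1))
    (hβ : ∀ k ≥ 1, β k = 1 / (2 * LΨ))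
    (hlam : ∀ k ≥ 1, lam k = (k : ℝ) * β k / 2)
    (x xag xmd : ℕ → EuclideanSpace ℝ (Fin n))
    (hag0 : xag 0 = x 0)
    (hmd : ∀ k ≥ 1, xmd k = (1 - α k) • xag (k - 1) + α k • x (k - 1))
    (hx : ∀ k ≥ 1, x k = P (x (k - 1)) (g (xmd k)) (lam k))
    (hxag : ∀ k ≥ 1, xag k = P (xmd k) (g (xmd k)) (β k))
    (xstar : EuclideanSpace ℝ (Fin n))
    (hstar_dom : X xstar ≠ ⊤)
    (hmin : ∀ z, ((Ψ xstar : ℝ) : EReal) + X xstar ≤ ((Ψ z : ℝ) : EReal) + X z) :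
    ∀ N : ℕ, 1 ≤ N →
      ((Ψ (xag N) : ℝ) : EReal) + X (xag N) ≤
        ((Ψ xstar : ℝ) : EReal) + X xstar +
          ((4 * LΨ * ‖x 0 - xstar‖ ^ 2 / ((N : ℝ) * ((N : ℝ) + 1)) : ℝ) : EReal) :=
  ag_composite_convex_rate_general Ψ g LΨ hLΨ hg hL hΨconv X hbot hXconv P hP α β lam hα hβ hlam x
    xag xmd hmd hx hxag xstar hstar_dom
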